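/- arXiv:1306.2394 — 4 statements merged into one kernel-verified Lean document; each statement's English description precedes it below -/
import Mathlib

section
/- Let g = g₁⋯g_p be a product of pairwise commuting elements, and suppose there are nonzero integers n₁,…,n_p such that all g_i^{n_i} are conjugate to each other and 1/n₁ + ⋯ + 1/n_p = 0. Then every homogeneous quasi-morphism H : G → ℝ satisfies H(g) = 0. -/
/-!
For a homogeneous quasi-morphism, `m * H x - m * H y` is bounded in `m` whenever `x ^ m` and
`y ^ m` differ by a bounded number of defects; this makes `H` additive on commuting pairs and
conjugation invariant. Then `H g = ∑ H gᵢ`, while `nᵢ * H gᵢ = H (gᵢ ^ nᵢ)` is a common value `c`,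
so `H g = c * ∑ 1 / nᵢ = 0`.
-/

open Filter Finset
open scoped commutatorElement

def IsQuasimorphism {G : Type*} [Group G] (H : G → ℝ) : Prop :=
  ∃ D : ℝ, ∀ x y : G, |H (x * y) - H x - H y| ≤ D

noncomputable def defect {G : Type*} [Group G] (H : G → ℝ) : ℝ :=
  sSup {d : ℝ | ∃ x y : G, d = |H (x * y) - H x - H y|}

def IsHomogeneousQM {G : Type*} [Group G] (H : G → ℝ) : Prop :=
  IsQuasimorphism H ∧ ∀ (g : G) (m : ℤ), H (g ^ m) = m * H g

def IsProdCommutators {G : Type*} [Group G] (g : G) (n : ℕ) : Prop :=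
  ∃ a b : Fin n → G, g = (List.ofFn fun i => ⁅a i, b i⁆).prod

noncomputable def cl {G : Type*} [Group G] (g : G) : ℕ :=
  sInf {n : ℕ | IsProdCommutators g n}

noncomputable def scl {G : Type*} [Group G] (g : G) : ℝ :=
  Filter.liminf (fun n : ℕ => (cl (g ^ n) : ℝ) / n) Filter.atTop

lemma eq_of_forall_abs_nat_mul_sub_le {x y C : ℝ} (h : ∀ m : ℕ, |m * x - m * y| ≤ C) :
    x = y := by
  by_contra hxy
  have hpos : 0 < |x - y| := abs_pos.mpr (sub_ne_zero.mpr hxy)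
  obtain ⟨m, hm⟩ := exists_nat_gt (C / |x - y|)
  have hle : (m : ℝ) * |x - y| ≤ C := by
    simpa only [← mul_sub, abs_mul, Nat.abs_cast] using h m
  exact absurd ((le_div_iff₀ hpos).mpr hle) (not_le.mpr hm)

lemma Finset.sum_eq_zero_of_mul_eq_mul {ι : Type*} [Fintype ι] {x n : ι → ℝ}
    (hn : ∀ i, n i ≠ 0) (hx : ∀ i j, n i * x i = n j * x j) (hsum : ∑ i, 1 / n i = 0) :
    ∑ i, x i = 0 := by
  rcases isEmpty_or_nonempty ι with _ | ⟨⟨i₀⟩⟩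
  · simp
  · calc ∑ i, x i = ∑ i, n i₀ * x i₀ * (1 / n i) := by
          refine sum_congr rfl fun i _ => ?_
          rw [← hx i i₀]
          field_simp [hn i]
      _ = 0 := by rw [← mul_sum, hsum, mul_zero]

namespace IsHomogeneousQM

variable {G : Type*} [Group G] {H : G → ℝ}

lemma map_pow (hH : IsHomogeneousQM H) (g : G) (m : ℕ) : H (g ^ m) = m * H g := by
  simpa using hH.2 g m

lemma map_one (hH : IsHomogeneousQM H) : H 1 = 0 := by
  simpa using hH.2 1 0

lemma map_inv (hH : IsHomogeneousQM H) (g : G) : H g⁻¹ = -H g := by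
  simpa using hH.2 g (-1)

lemma map_mul_of_commute (hH : IsHomogeneousQM H) {a b : G} (h : Commute a b) :
    H (a * b) = H a + H b := by
  obtain ⟨D, hD⟩ := hH.1
  refine eq_of_forall_abs_nat_mul_sub_le (C := D) fun m => ?_
  have hpow : H ((a * b) ^ m) = H (a ^ m * b ^ m) := by rw [h.mul_pow]
  calc |m * H (a * b) - m * (H a + H b)|
      = |H (a ^ m * b ^ m) - H (a ^ m) - H (b ^ m)| := by
        rw [← hH.map_pow, hpow, hH.map_pow, hH.map_pow, mul_add, sub_sub]
    _ ≤ D := hD _ _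

lemma map_conj (hH : IsHomogeneousQM H) (b a : G) : H (b * a * b⁻¹) = H a := by
  obtain ⟨D, hD⟩ := hH.1
  refine eq_of_forall_abs_nat_mul_sub_le (C := D + D) fun m => ?_
  -- `H b` and `H b⁻¹` cancel, so two defects bound the difference.
  have hsplit : m * H (b * a * b⁻¹) - m * H a
      = (H (b * (a ^ m * b⁻¹)) - H b - H (a ^ m * b⁻¹))
        + (H (a ^ m * b⁻¹) - H (a ^ m) - H b⁻¹) := by
    rw [← hH.map_pow, ← hH.map_pow, conj_pow, mul_assoc, hH.map_inv]
    ring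
  rw [hsplit]
  exact (abs_add_le _ _).trans (add_le_add (hD _ _) (hD _ _))

lemma map_eq_of_isConj (hH : IsHomogeneousQM H) {a c : G} (h : IsConj a c) : H a = H c := by
  obtain ⟨b, hb⟩ := isConj_iff.mp h
  rw [← hb, hH.map_conj]

lemma map_list_prod (hH : IsHomogeneousQM H) {l : List G} (hl : l.Pairwise Commute) :
    H l.prod = (l.map H).sum := by
  induction l with
  | nil => simp [hH.map_one]
  | cons a l ih =>
    rw [List.pairwise_cons] at hl
    rw [List.prod_cons, hH.map_mul_of_commute (Commute.list_prod_right l a hl.1),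
      ih hl.2, List.map_cons, List.sum_cons]

end IsHomogeneousQM

theorem stmt2 {G : Type*} [Group G] (p : ℕ) (g : G) (gs : Fin p → G) (n : Fin p → ℤ)
    (hg : g = (List.ofFn gs).prod)
    (hcomm : ∀ i j, Commute (gs i) (gs j))
    (hn : ∀ i, n i ≠ 0)
    (hconj : ∀ i j, IsConj (gs i ^ n i) (gs j ^ n j))
    (hsum : ∑ i, (1 : ℝ) / ((n i : ℝ)) = 0)
    (H : G → ℝ) (hH : IsHomogeneousQM H) : H g = 0 := by
  have hadd : H g = ∑ i, H (gs i) := by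
    rw [hg, hH.map_list_prod (List.pairwise_ofFn.mpr fun i j _ => hcomm i j), List.map_ofFn,
      List.sum_ofFn, Function.comp_def]
  have hconst : ∀ i j, (n i : ℝ) * H (gs i) = n j * H (gs j) := fun i j => by
    rw [← hH.2, ← hH.2, hH.map_eq_of_isConj (hconj i j)]
  rw [hadd]
  exact Finset.sum_eq_zero_of_mul_eq_mul (fun i => Int.cast_ne_zero.mpr (hn i)) hconst hsum
end

section
/- Let G be a group, H' : G' → ℝ a homogeneous quasi-morphism on a finite index normal subgroup G' of G, and define H(γ) = Σ_{i=1}^{s} H'(γ_i γ γ_i⁻¹) for coset representatives γ₁,…,γ_s of G/G'. Then H is a quasi-morphism on G' with defect at most s·Δ(H') and H is invariant under conjugation by elements of G up to a bounded error. -/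
open Filter Finset
open scoped commutatorElement

/-
Each summand `x ↦ H'(γᵢ x γᵢ⁻¹)` is a quasi-morphism on `G'` of defect at most `D`, which gives the
defect bound `s·D`. For the invariance, a homogeneous quasi-morphism is invariant under conjugation
within `G'`: `n |H'(a b a⁻¹) - H'(b)| = |H'(a bⁿ a⁻¹) - H'(bⁿ)| ≤ 2D` for every `n`. Hence
`H'(g x g⁻¹)` only depends on the coset `g G'`, and conjugating `x` by `β` permutes the cosets
`γᵢ β G'`, so the sum is exactly invariant.
-/

lemma eq_zero_of_forall_natCast_mul_abs_le {x C : ℝ} (h : ∀ n : ℕ, n * |x| ≤ C) : x = 0 := by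
  by_contra hx
  obtain ⟨n, hn⟩ := exists_nat_gt (C / |x|)
  rw [div_lt_iff₀ (abs_pos.2 hx)] at hn
  linarith [h n]

lemma abs_sum_sub_sum_sub_sum_le {ι : Type*} (t : Finset ι) {a b c : ι → ℝ} {D : ℝ}
    (h : ∀ i ∈ t, |a i - b i - c i| ≤ D) :
    |∑ i ∈ t, a i - ∑ i ∈ t, b i - ∑ i ∈ t, c i| ≤ #t * D := by
  rw [← sum_sub_distrib, ← sum_sub_distrib]
  calc |∑ i ∈ t, (a i - b i - c i)| ≤ ∑ i ∈ t, |a i - b i - c i| := abs_sum_le_sum_abs _ _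
    _ ≤ ∑ _i ∈ t, D := sum_le_sum h
    _ = #t * D := by rw [sum_const, nsmul_eq_mul]

section QuasimorphismOnSubgroup

variable {G : Type*} [Group G] {K : Subgroup G} {H' : G → ℝ} {D : ℝ}

lemma abs_apply_conj_sub_le (hdef : ∀ x ∈ K, ∀ y ∈ K, |H' (x * y) - H' x - H' y| ≤ D)
    (hinv : ∀ a ∈ K, H' a⁻¹ = -H' a) {a c : G} (ha : a ∈ K) (hc : c ∈ K) :
    |H' (a * c * a⁻¹) - H' c| ≤ 2 * D := by
  have h₁ := hdef _ (mul_mem ha hc) _ (inv_mem ha)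
  have h₂ := hdef _ ha _ hc
  have hsplit : H' (a * c * a⁻¹) - H' c =
      (H' (a * c * a⁻¹) - H' (a * c) - H' a⁻¹) + (H' (a * c) - H' a - H' c) := by
    rw [hinv a ha]; ring
  rw [hsplit]
  linarith [abs_add_le (H' (a * c * a⁻¹) - H' (a * c) - H' a⁻¹) (H' (a * c) - H' a - H' c)]

lemma apply_conj_of_homogeneous (hdef : ∀ x ∈ K, ∀ y ∈ K, |H' (x * y) - H' x - H' y| ≤ D)
    (hhom : ∀ x ∈ K, ∀ m : ℤ, H' (x ^ m) = m * H' x) {a b : G} (ha : a ∈ K) (hb : b ∈ K) :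
    H' (a * b * a⁻¹) = H' b := by
  have hinv : ∀ a ∈ K, H' a⁻¹ = -H' a := fun a ha => by simpa using hhom a ha (-1)
  have hpow : ∀ x ∈ K, ∀ n : ℕ, H' (x ^ n) = n * H' x := fun x hx n => by
    simpa using hhom x hx n
  refine sub_eq_zero.1 (eq_zero_of_forall_natCast_mul_abs_le (C := 2 * D) fun n => ?_)
  calc (n : ℝ) * |H' (a * b * a⁻¹) - H' b|
      = |H' ((a * b * a⁻¹) ^ n) - H' (b ^ n)| := by
        rw [hpow _ (mul_mem (mul_mem ha hb) (inv_mem ha)) n, hpow b hb n, ← mul_sub, abs_mul,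
          Nat.abs_cast]
    _ ≤ 2 * D := by
        rw [conj_pow]
        exact abs_apply_conj_sub_le hdef hinv ha (pow_mem hb n)

end QuasimorphismOnSubgroup

section NormalSubgroup

variable {G : Type*} [Group G] {N : Subgroup G} [N.Normal] {H' : G → ℝ}

lemma apply_conj_eq_of_mk_eq (hconj : ∀ a ∈ N, ∀ b ∈ N, H' (a * b * a⁻¹) = H' b)
    {g g' x : G} (hgg' : (g : G ⧸ N) = g') (hx : x ∈ N) :
    H' (g * x * g⁻¹) = H' (g' * x * g'⁻¹) := by
  have hn : g⁻¹ * g' ∈ N := QuotientGroup.eq.1 hgg'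
  have hc : g' * (g⁻¹ * g')⁻¹ * g'⁻¹ ∈ N := ‹N.Normal›.conj_mem _ (inv_mem hn) g'
  rw [← hconj _ hc _ (‹N.Normal›.conj_mem x hx g')]
  congr 1
  group

lemma sum_apply_conj_mul_right {s : ℕ} {γ : Fin s → G}
    (hcoset : Function.Bijective fun i => (γ i : G ⧸ N))
    (hconj : ∀ a ∈ N, ∀ b ∈ N, H' (a * b * a⁻¹) = H' b) (β : G) {x : G} (hx : x ∈ N) :
    ∑ i, H' (γ i * β * x * (γ i * β)⁻¹) = ∑ i, H' (γ i * x * (γ i)⁻¹) := by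
  let e : Fin s ≃ G ⧸ N := Equiv.ofBijective _ hcoset
  exact Fintype.sum_equiv ((e.trans (Equiv.mulRight (β : G ⧸ N))).trans e.symm) _ _
    fun i => apply_conj_eq_of_mk_eq hconj (e.apply_symm_apply _).symm hx

end NormalSubgroup

theorem stmt7 {G : Type*} [Group G] (G' : Subgroup G) [G'.Normal]
    (s : ℕ) (γ : Fin s → G)
    (hcoset : Function.Bijective fun i : Fin s => (QuotientGroup.mk (γ i) : G ⧸ G'))
    (H' : G → ℝ) (D : ℝ)
    (hdef : ∀ x ∈ G', ∀ y ∈ G', |H' (x * y) - H' x - H' y| ≤ D)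
    (hhom : ∀ x ∈ G', ∀ m : ℤ, H' (x ^ m) = m * H' x) :
    (∀ x ∈ G', ∀ y ∈ G',
      |(∑ i, H' (γ i * (x * y) * (γ i)⁻¹)) - (∑ i, H' (γ i * x * (γ i)⁻¹)) -
        (∑ i, H' (γ i * y * (γ i)⁻¹))| ≤ s * D) ∧
    (∃ C : ℝ, ∀ β : G, ∀ x ∈ G',
      |(∑ i, H' (γ i * (β * x * β⁻¹) * (γ i)⁻¹)) - (∑ i, H' (γ i * x * (γ i)⁻¹))| ≤ C) := by
  have hconj : ∀ a ∈ G', ∀ b ∈ G', H' (a * b * a⁻¹) = H' b :=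
    fun a ha b hb => apply_conj_of_homogeneous hdef hhom ha hb
  refine ⟨fun x hx y hy => ?_, ⟨0, fun β x hx => ?_⟩⟩
  · have hterm : ∀ i ∈ univ, |H' (γ i * (x * y) * (γ i)⁻¹) - H' (γ i * x * (γ i)⁻¹) -
        H' (γ i * y * (γ i)⁻¹)| ≤ D := fun i _ => by
      rw [show γ i * (x * y) * (γ i)⁻¹ = γ i * x * (γ i)⁻¹ * (γ i * y * (γ i)⁻¹) by group]
      exact hdef _ (‹G'.Normal›.conj_mem x hx _) _ (‹G'.Normal›.conj_mem y hy _)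
    simpa using abs_sum_sub_sum_sub_sum_le univ hterm
  · have hreassoc : ∀ i, γ i * (β * x * β⁻¹) * (γ i)⁻¹ = γ i * β * x * (γ i * β)⁻¹ :=
      fun i => by group
    simp only [hreassoc, sum_apply_conj_mul_right hcoset hconj β hx, sub_self, abs_zero, le_refl]
end

section
/- Let g be an element of a group G such that for some homogeneous quasi-morphism H : G → ℝ, H(g) ≠ 0. If g ∈ [G,G] then scl(g) > 0, and consequently the sequence cl(g^n) is unbounded. -/
open Filter Finset
open scoped commutatorElement

/-!
Bavard's inequality, in its elementary direction: a quasimorphism with defect at most `D` that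
is odd is bounded by `3D` on commutators, hence by `4D · k` on products of `k` commutators.
Homogeneity gives `H (g ^ n) = n · H g`, so `n · |H g| ≤ 4D · cl (g ^ n)` and
`scl g ≥ |H g| / 4D > 0`. If `cl (g ^ n)` were bounded, `cl (g ^ n) / n` would tend to `0`,
forcing `scl g = 0`.
-/

namespace IsProdCommutators

variable {G : Type*} [Group G]

theorem one : IsProdCommutators (1 : G) 0 :=
  ⟨Fin.elim0, Fin.elim0, by simp⟩

theorem commutatorElement (a b : G) : IsProdCommutators ⁅a, b⁆ 1 :=
  ⟨fun _ => a, fun _ => b, by simp⟩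

theorem mul {x y : G} {m n : ℕ} (hx : IsProdCommutators x m) (hy : IsProdCommutators y n) :
    IsProdCommutators (x * y) (m + n) := by
  obtain ⟨a, b, rfl⟩ := hx
  obtain ⟨c, d, rfl⟩ := hy
  refine ⟨Fin.append a c, Fin.append b d, ?_⟩
  simp [List.ofFn_add, Fin.append_right]

theorem inv {x : G} {n : ℕ} (hx : IsProdCommutators x n) : IsProdCommutators x⁻¹ n := by
  induction n generalizing x with
  | zero =>
    obtain ⟨a, b, rfl⟩ := hx
    simpa using one
  | succ n ih =>
    obtain ⟨a, b, rfl⟩ := hx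
    have htail := ih ⟨fun i => a i.succ, fun i => b i.succ, rfl⟩
    have hhead : IsProdCommutators ⁅a 0, b 0⁆⁻¹ 1 := by
      rw [commutatorElement_inv]
      exact commutatorElement _ _
    simpa [List.ofFn_succ, mul_inv_rev] using htail.mul hhead

theorem pow {x : G} {m : ℕ} (hx : IsProdCommutators x m) (n : ℕ) :
    IsProdCommutators (x ^ n) (n * m) := by
  induction n with
  | zero => simpa using one
  | succ n ih => simpa [pow_succ, Nat.succ_mul] using ih.mul hx

end IsProdCommutators

theorem exists_isProdCommutators_of_mem_commutator {G : Type*} [Group G] {g : G}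
    (hg : g ∈ commutator G) : ∃ m, IsProdCommutators g m := by
  rw [commutator_eq_closure] at hg
  induction hg using Subgroup.closure_induction with
  | mem x hx =>
    obtain ⟨a, b, rfl⟩ := hx
    exact ⟨1, .commutatorElement a b⟩
  | one => exact ⟨0, .one⟩
  | mul x y _ _ hx hy =>
    obtain ⟨m, hm⟩ := hx
    obtain ⟨n, hn⟩ := hy
    exact ⟨m + n, hm.mul hn⟩
  | inv x _ hx =>
    obtain ⟨m, hm⟩ := hx
    exact ⟨m, hm.inv⟩

section CommutatorLength

variable {G : Type*} [Group G]

theorem isProdCommutators_cl {g : G} {m : ℕ} (hm : IsProdCommutators g m) :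
    IsProdCommutators g (cl g) :=
  Nat.sInf_mem (s := {k | IsProdCommutators g k}) ⟨m, hm⟩

theorem cl_pow_le {g : G} {m : ℕ} (hm : IsProdCommutators g m) (n : ℕ) : cl (g ^ n) ≤ n * m :=
  Nat.sInf_le (hm.pow n)

theorem le_scl_of_mul_le_cl_pow {g : G} {m : ℕ} (hm : IsProdCommutators g m) {c : ℝ}
    (hc : ∀ n : ℕ, c * n ≤ cl (g ^ n)) : c ≤ scl g := by
  have hbdd : ∀ n : ℕ, (cl (g ^ n) : ℝ) / n ≤ m := by
    refine fun n => div_le_of_le_mul₀ (by positivity) (by positivity) ?_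
    exact_mod_cast (cl_pow_le hm n).trans_eq (Nat.mul_comm n m)
  refine le_liminf_of_le (isCoboundedUnder_ge_of_le atTop hbdd) ?_
  filter_upwards [eventually_gt_atTop 0] with n hn
  rw [le_div_iff₀ (by exact_mod_cast hn)]
  exact hc n

theorem scl_eq_zero_of_cl_pow_le {g : G} {B : ℕ} (hB : ∀ n : ℕ, cl (g ^ n) ≤ B) : scl g = 0 := by
  have hlim : Tendsto (fun n : ℕ => (cl (g ^ n) : ℝ) / n) atTop (nhds 0) := by
    refine squeeze_zero (fun n => by positivity) (fun n => ?_)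
      (tendsto_const_div_atTop_nhds_zero_nat (B : ℝ))
    gcongr
    exact_mod_cast hB n
  exact hlim.liminf_eq

end CommutatorLength

section Quasimorphism

variable {G : Type*} [Group G] {H : G → ℝ} {D : ℝ}

theorem IsQuasimorphism.exists_pos_bound (hH : IsQuasimorphism H) :
    ∃ D > 0, ∀ x y : G, |H (x * y) - H x - H y| ≤ D := by
  obtain ⟨D, hD⟩ := hH
  exact ⟨max D 1, by positivity, fun x y => (hD x y).trans (le_max_left _ _)⟩

theorem IsHomogeneousQM.map_pow_s9 (hH : IsHomogeneousQM H) (g : G) (n : ℕ) :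
    H (g ^ n) = n * H g := by
  simpa using hH.2 g n

theorem IsHomogeneousQM.map_inv_s9 (hH : IsHomogeneousQM H) (g : G) : H g⁻¹ = -H g := by
  simpa using hH.2 g (-1)

variable (hD : ∀ x y : G, |H (x * y) - H x - H y| ≤ D) (hinv : ∀ x : G, H x⁻¹ = -H x)
include hD hinv

theorem abs_map_commutatorElement_le (a b : G) : |H ⁅a, b⁆| ≤ 3 * D := by
  -- telescope `H (a b a⁻¹ b⁻¹)` through the partial products; oddness cancels the single terms
  have h₁ := abs_le.mp (hD (a * b * a⁻¹) b⁻¹)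
  have h₂ := abs_le.mp (hD (a * b) a⁻¹)
  have h₃ := abs_le.mp (hD a b)
  rw [hinv] at h₁ h₂
  rw [commutatorElement_def]
  exact abs_le.mpr ⟨by linarith, by linarith⟩

theorem abs_map_list_prod_le {C : ℝ} {l : List G} (hl : ∀ x ∈ l, |H x| ≤ C) :
    |H l.prod| ≤ (C + D) * l.length := by
  induction l with
  | nil =>
    have hone : H 1 = 0 := by
      have := hinv 1
      rw [inv_one] at this
      linarith
    simp [hone]
  | cons x l ih =>
    have hmul := abs_le.mp (hD x l.prod)
    have hx := abs_le.mp (hl x List.mem_cons_self)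
    have hl' := abs_le.mp (ih fun y hy => hl y (List.mem_cons_of_mem x hy))
    rw [List.prod_cons, List.length_cons, Nat.cast_succ]
    exact abs_le.mpr ⟨by linarith, by linarith⟩

theorem abs_map_le_of_isProdCommutators {x : G} {k : ℕ} (hx : IsProdCommutators x k) :
    |H x| ≤ 4 * D * k := by
  obtain ⟨a, b, rfl⟩ := hx
  have := abs_map_list_prod_le hD hinv (C := 3 * D)
    (List.forall_mem_ofFn_iff.mpr fun i => abs_map_commutatorElement_le hD hinv (a i) (b i))
  rw [List.length_ofFn] at this
  linarith

end Quasimorphism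

theorem stmt9 {G : Type*} [Group G] (g : G) (H : G → ℝ)
    (hH : IsHomogeneousQM H) (h0 : H g ≠ 0) (hg : g ∈ commutator G) :
    0 < scl g ∧ ¬ ∃ B : ℕ, ∀ n : ℕ, cl (g ^ n) ≤ B := by
  obtain ⟨D, hDpos, hD⟩ := hH.1.exists_pos_bound
  obtain ⟨m, hm⟩ := exists_isProdCommutators_of_mem_commutator hg
  have hbavard : |H g| / (4 * D) ≤ scl g := by
    refine le_scl_of_mul_le_cl_pow hm fun n => ?_
    have := abs_map_le_of_isProdCommutators hD hH.map_inv_s9 (isProdCommutators_cl (hm.pow n))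
    rw [hH.map_pow_s9, abs_mul, Nat.abs_cast] at this
    rw [div_mul_eq_mul_div, div_le_iff₀ (by positivity)]
    linarith
  have hscl : 0 < scl g := lt_of_lt_of_le (by positivity) hbavard
  exact ⟨hscl, fun ⟨B, hB⟩ => hscl.ne' (scl_eq_zero_of_cl_pow_le hB)⟩
end

section
/- Suppose g ∈ [G,G] can be written as g = h₁^{n₁} h₂^{n₂} ⋯ h_p^{n_p} where all h_i are pairwise conjugate (h_i = γ_i h_{i−1} γ_i⁻¹ for i ≥ 2), the factors pairwise commute, and n₁ + ⋯ + n_p = 0. Then g is a product of at most p − 1 commutators. -/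
open Filter Finset
open scoped commutatorElement

/-! The commutator `⁅x ^ k, γ⁆` equals `x ^ k * y ^ (-k)` when `y = γ x γ⁻¹`. With
`s i = n 0 + ⋯ + n (i - 1)`, the product of the commutators `⁅h i ^ s (i + 1), γ (i + 1)⁆`
for `i < p - 1` therefore telescopes to `h 0 ^ n 0 ⋯ h (p - 2) ^ n (p - 2) * h (p - 1) ^ (-s (p - 1))`,
and `-s (p - 1) = n (p - 1)` because the exponents sum to zero. -/

theorem cl_le_of_isProdCommutators {G : Type*} [Group G] {g : G} {m : ℕ}
    (hg : IsProdCommutators g m) : cl g ≤ m :=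
  Nat.sInf_le hg

theorem isProdCommutators_prod_range {G : Type*} [Group G] (m : ℕ) (a b : ℕ → G) :
    IsProdCommutators ((List.range m).map fun i => ⁅a i, b i⁆).prod m := by
  refine ⟨fun i => a i, fun i => b i, ?_⟩
  rw [List.ofFn_eq_map, ← List.map_coe_finRange_eq_range, List.map_map]
  rfl

theorem commutatorElement_zpow_eq_of_conj {G : Type*} [Group G] {x y γ : G}
    (hy : y = γ * x * γ⁻¹) (k : ℤ) : ⁅x ^ k, γ⁆ = x ^ k * y ^ (-k) := by
  rw [hy, conj_zpow, commutatorElement_def]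
  group

theorem prod_range_commutatorElement_telescope {G : Type*} [Group G] (h γ : ℕ → G) (n : ℕ → ℤ)
    (k : ℕ) (hconj : ∀ i < k, h (i + 1) = γ (i + 1) * h i * (γ (i + 1))⁻¹) :
    ((List.range k).map fun i => ⁅h i ^ ∑ j ∈ range (i + 1), n j, γ (i + 1)⁆).prod =
      ((List.range k).map fun i => h i ^ n i).prod * h k ^ (-∑ j ∈ range k, n j) := by
  induction k with
  | zero => simp
  | succ k ih =>
    simp only [List.range_succ, List.map_append, List.prod_append, List.map_singleton,
      List.prod_singleton]
    rw [ih fun i hi => hconj i (by omega),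
      commutatorElement_zpow_eq_of_conj (hconj k (by omega)), sum_range_succ]
    simp only [mul_assoc, neg_add, zpow_add, zpow_neg, inv_mul_cancel_left]

theorem stmt10_general {G : Type*} [Group G] (p : ℕ) (h γ : ℕ → G) (n : ℕ → ℤ) (g : G)
    (hg : g = ((List.range p).map fun i => h i ^ n i).prod)
    (hconj : ∀ i, 1 ≤ i → i < p → h i = γ i * h (i - 1) * (γ i)⁻¹)
    (hsum : ∑ i ∈ Finset.range p, n i = 0) :
    cl g ≤ p - 1 := by
  subst hg
  obtain _ | m := p
  · exact cl_le_of_isProdCommutators ⟨Fin.elim0, Fin.elim0, rfl⟩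
  have hconj' : ∀ i < m, h (i + 1) = γ (i + 1) * h i * (γ (i + 1))⁻¹ := fun i hi =>
    hconj (i + 1) (by omega) (by omega)
  have hlast : -∑ j ∈ range m, n j = n m := by
    rw [sum_range_succ] at hsum
    omega
  have hprod := prod_range_commutatorElement_telescope h γ n m hconj'
  rw [hlast] at hprod
  rw [List.range_succ, List.map_append, List.prod_append, List.map_singleton, List.prod_singleton,
    ← hprod, Nat.add_sub_cancel]
  exact cl_le_of_isProdCommutators (isProdCommutators_prod_range m _ _)

theorem stmt10 {G : Type*} [Group G] (p : ℕ) (h γ : ℕ → G) (n : ℕ → ℤ) (g : G)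
    (hg : g = ((List.range p).map fun i => h i ^ n i).prod)
    (hconj : ∀ i, 1 ≤ i → i < p → h i = γ i * h (i - 1) * (γ i)⁻¹)
    (hcomm : ∀ i < p, ∀ j < p, Commute (h i ^ n i) (h j ^ n j))
    (hsum : ∑ i ∈ Finset.range p, n i = 0) :
    cl g ≤ p - 1 :=
  stmt10_general p h γ n g hg hconj hsum
end
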